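/- arXiv:2211.01610 — 2 statements merged into one kernel-verified Lean document; each statement's English description precedes it below -/
import Mathlib

section
/- Let Φ = f + g with f : ℝ^d → ℝ convex with L-Lipschitz gradient and g : ℝ^d → ℝ continuous convex, and let s > 0 with s ≤ 1/L. Then for all x, y ∈ ℝ^d, Φ(y − s·G_s(y)) ≤ Φ(x) + ⟨G_s(y), y − x⟩ − (s − s²L/2)·‖G_s(y)‖². -/
/-!
Write `w = G_s(y)`, so that `y - s • w = P_s(y)`. The claim is the sum of three inequalities:
the descent lemma for `f` between `y` and `y - s • w`, the first-order convexity inequality for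
`f` at `y` tested against `x`, and the optimality condition of the proximal step, which says that
`w - ∇f(y)` is a subgradient of `g` at `P_s(y)`.
-/

open scoped RealInnerProductSpace
open Set Filter Topology

section

variable {E : Type*} [NormedAddCommGroup E] [InnerProductSpace ℝ E]

theorem HasGradientAt.hasDerivAt_add_smul [CompleteSpace E] {f : E → ℝ} {f' x v : E} {t : ℝ}
    (h : HasGradientAt f f' (x + t • v)) :
    HasDerivAt (fun t : ℝ => f (x + t • v)) ⟪f', v⟫ t := by
  have hline : HasDerivAt (fun t : ℝ => x + t • v) v t := by
    simpa using ((hasDerivAt_id t).smul_const v).const_add x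
  have hcomp := h.hasFDerivAt.comp_hasDerivAt t hline
  simp only [InnerProductSpace.toDual_apply_apply] at hcomp
  exact hcomp

theorem ConvexOn.add_inner_le_of_hasGradientAt [CompleteSpace E] {S : Set E} {f : E → ℝ}
    (hf : ConvexOn ℝ S f) {x y f' : E} (hx : x ∈ S) (hy : y ∈ S) (h : HasGradientAt f f' x) :
    f x + ⟪f', y - x⟫ ≤ f y := by
  have hline : (fun t : ℝ => f (x + t • (y - x))) = f ∘ AffineMap.lineMap x y := by
    ext t
    simp [AffineMap.lineMap_apply_module', add_comm]
  have hconv : ConvexOn ℝ (AffineMap.lineMap x y ⁻¹' S) (fun t : ℝ => f (x + t • (y - x))) :=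
    hline ▸ hf.comp_affineMap _
  have hderiv : HasDerivAt (fun t : ℝ => f (x + t • (y - x))) ⟪f', y - x⟫ 0 :=
    HasGradientAt.hasDerivAt_add_smul (by simpa using h)
  have hslope := hconv.le_slope_of_hasDerivAt (x := 0) (y := 1) (by simpa using hx)
    (by simpa using hy) zero_lt_one hderiv
  simp only [slope_def_field] at hslope
  norm_num at hslope
  linarith

theorem le_add_inner_add_sq_of_lipschitz_gradient [CompleteSpace E] {f : E → ℝ} {f' : E → E}
    (hf : ∀ x, HasGradientAt f (f' x) x) {L : ℝ} (hL : ∀ x y, ‖f' x - f' y‖ ≤ L * ‖x - y‖)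
    (x v : E) : f (x + v) ≤ f x + ⟪f' x, v⟫ + L / 2 * ‖v‖ ^ 2 := by
  set φ : ℝ → ℝ := fun t => f (x + t • v) - t * ⟪f' x, v⟫ - L / 2 * t ^ 2 * ‖v‖ ^ 2
  have hφ : ∀ t, HasDerivAt φ (⟪f' (x + t • v), v⟫ - ⟪f' x, v⟫ - L * t * ‖v‖ ^ 2) t := by
    intro t
    have hquad : HasDerivAt (fun t : ℝ => L / 2 * t ^ 2 * ‖v‖ ^ 2) (L * t * ‖v‖ ^ 2) t := by
      refine (((hasDerivAt_pow 2 t).const_mul (L / 2)).mul_const (‖v‖ ^ 2)).congr_deriv ?_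
      ring
    refine (((hf _).hasDerivAt_add_smul.fun_sub ((hasDerivAt_id' t).mul_const _)).fun_sub
      hquad).congr_deriv ?_
    ring
  have hφ_nonpos : ∀ t ∈ interior (Ici (0 : ℝ)),
      ⟪f' (x + t • v), v⟫ - ⟪f' x, v⟫ - L * t * ‖v‖ ^ 2 ≤ 0 := by
    intro t ht
    rw [interior_Ici] at ht
    calc ⟪f' (x + t • v), v⟫ - ⟪f' x, v⟫ - L * t * ‖v‖ ^ 2
        = ⟪f' (x + t • v) - f' x, v⟫ - L * t * ‖v‖ ^ 2 := by rw [inner_sub_left]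
      _ ≤ ‖f' (x + t • v) - f' x‖ * ‖v‖ - L * t * ‖v‖ ^ 2 := by
        gcongr; exact real_inner_le_norm _ _
      _ ≤ L * ‖t • v‖ * ‖v‖ - L * t * ‖v‖ ^ 2 := by
        gcongr; simpa using hL (x + t • v) x
      _ = 0 := by rw [norm_smul, Real.norm_of_nonneg (le_of_lt ht)]; ring
  have hanti : AntitoneOn φ (Ici 0) :=
    antitoneOn_of_hasDerivWithinAt_nonpos (convex_Ici 0)
      (fun t _ => (hφ t).continuousAt.continuousWithinAt)
      (fun t _ => (hφ t).hasDerivWithinAt) hφ_nonpos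
  have hφ_one_le := hanti (mem_Ici.2 le_rfl) (mem_Ici.2 zero_le_one) zero_le_one
  simp only [φ] at hφ_one_le
  norm_num at hφ_one_le
  linarith

theorem nonneg_of_forall_mem_Ioc_nonneg_add_mul {a b : ℝ}
    (h : ∀ t ∈ Ioc (0 : ℝ) 1, 0 ≤ a + t * b) : 0 ≤ a := by
  have hlim : Tendsto (fun t : ℝ => a + t * b) (𝓝[>] 0) (𝓝 a) := by
    have hcont : Continuous fun t : ℝ => a + t * b := by fun_prop
    simpa using (hcont.tendsto 0).mono_left nhdsWithin_le_nhds
  exact ge_of_tendsto hlim (by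
    filter_upwards [Ioc_mem_nhdsGT zero_lt_one] with t ht using h t ht)

theorem ConvexOn.add_inner_le_of_isMinOn_prox {S : Set E} {g : E → ℝ} (hg : ConvexOn ℝ S g)
    {s : ℝ} (hs : 0 < s) {u p z : E} (hp : p ∈ S) (hz : z ∈ S)
    (hmin : IsMinOn (fun w => 1 / (2 * s) * ‖w - u‖ ^ 2 + g w) S p) :
    g p + s⁻¹ * ⟪u - p, z - p⟫ ≤ g z := by
  have hstep : ∀ t ∈ Ioc (0 : ℝ) 1,
      0 ≤ g z - g p - s⁻¹ * ⟪u - p, z - p⟫ + t * (‖z - p‖ ^ 2 / (2 * s)) := by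
    intro t ht
    have hseg : (1 - t) • p + t • z = p + t • (z - p) := by module
    have hmem : p + t • (z - p) ∈ S :=
      hseg ▸ hg.1 hp hz (by linarith [ht.2]) ht.1.le (by ring)
    have hconv : g (p + t • (z - p)) ≤ (1 - t) * g p + t * g z :=
      hseg ▸ hg.2 hp hz (by linarith [ht.2]) ht.1.le (by ring)
    have hsq : ‖p + t • (z - p) - u‖ ^ 2
        = ‖p - u‖ ^ 2 - 2 * t * ⟪u - p, z - p⟫ + t ^ 2 * ‖z - p‖ ^ 2 := by
      rw [show p + t • (z - p) - u = -(u - p) + t • (z - p) by abel, norm_add_sq_real,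
        norm_neg, inner_neg_left, real_inner_smul_right, norm_smul, Real.norm_eq_abs, mul_pow,
        sq_abs, norm_sub_rev u p]
      ring
    have hle := isMinOn_iff.1 hmin _ hmem
    simp only [hsq] at hle
    refine nonneg_of_mul_nonneg_right ?_ ht.1
    field_simp at hle ⊢
    linarith [mul_le_mul_of_nonneg_left hconv hs.le]
  linarith [nonneg_of_forall_mem_Ioc_nonneg_add_mul hstep]

end

theorem pivotal_inequality_composite_general {d : ℕ}
    (f g : EuclideanSpace ℝ (Fin d) → ℝ)
    (f' : EuclideanSpace ℝ (Fin d) → EuclideanSpace ℝ (Fin d))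
    (L s : ℝ) (hs : 0 < s)
    (hfconv : ConvexOn ℝ Set.univ f)
    (hf' : ∀ x, HasGradientAt f (f' x) x)
    (hlip : ∀ x y, ‖f' x - f' y‖ ≤ L * ‖x - y‖)
    (hgconv : ConvexOn ℝ Set.univ g)
    (Φ : EuclideanSpace ℝ (Fin d) → ℝ) (hΦ : ∀ x, Φ x = f x + g x)
    (P : EuclideanSpace ℝ (Fin d) → EuclideanSpace ℝ (Fin d))
    (hP : ∀ x, IsMinOn (fun z => 1 / (2 * s) * ‖z - (x - s • f' x)‖ ^ 2 + g z) Set.univ (P x))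
    (G : EuclideanSpace ℝ (Fin d) → EuclideanSpace ℝ (Fin d))
    (hG : ∀ x, G x = s⁻¹ • (x - P x)) :
    ∀ x y : EuclideanSpace ℝ (Fin d),
      Φ (y - s • G y) ≤ Φ x + ⟪G y, y - x⟫ - (s - s ^ 2 * L / 2) * ‖G y‖ ^ 2 := by
  intro x y
  have hPy : P y = y - s • G y := by
    rw [hG, smul_smul, mul_inv_cancel₀ hs.ne', one_smul, sub_sub_cancel]
  have hdescent := le_add_inner_add_sq_of_lipschitz_gradient hf' hlip y (-(s • G y))
  have hgrad := hfconv.add_inner_le_of_hasGradientAt (mem_univ y) (mem_univ x) (hf' y)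
  have hprox := hgconv.add_inner_le_of_isMinOn_prox hs (mem_univ _) (mem_univ x) (hP y)
  rw [hPy, show y - s • f' y - (y - s • G y) = s • (G y - f' y) by module,
    show x - (y - s • G y) = (x - y) + s • G y by abel, real_inner_smul_left,
    ← mul_assoc, inv_mul_cancel₀ hs.ne', one_mul] at hprox
  rw [← sub_eq_add_neg, norm_neg, norm_smul, Real.norm_of_nonneg hs.le] at hdescent
  rw [hΦ, hΦ, ← neg_sub x y, inner_neg_right]
  simp only [inner_add_right, inner_sub_left, inner_neg_right, real_inner_smul_right,
    real_inner_self_eq_norm_sq] at hdescent hgrad hprox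
  linarith

/-- **Pivotal inequality for composite optimization.**
For `Φ = f + g` with `f` convex with `L`-Lipschitz gradient and `g` continuous convex,
step size `0 < s ≤ 1/L`, `P` the `s`-proximal operator and `G` the `s`-proximal
subgradient, one has
`Φ(y − s·G_s(y)) ≤ Φ(x) + ⟨G_s(y), y − x⟩ − (s − s²L/2)·‖G_s(y)‖²`. -/
theorem pivotal_inequality_composite {d : ℕ}
    (f g : EuclideanSpace ℝ (Fin d) → ℝ)
    (f' : EuclideanSpace ℝ (Fin d) → EuclideanSpace ℝ (Fin d))
    (L s : ℝ) (hL : 0 < L) (hs : 0 < s) (hsL : s ≤ 1 / L)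
    (hfconv : ConvexOn ℝ Set.univ f)
    (hf' : ∀ x, HasGradientAt f (f' x) x)
    (hlip : ∀ x y, ‖f' x - f' y‖ ≤ L * ‖x - y‖)
    (hgconv : ConvexOn ℝ Set.univ g) (hgcont : Continuous g)
    (Φ : EuclideanSpace ℝ (Fin d) → ℝ) (hΦ : ∀ x, Φ x = f x + g x)
    (P : EuclideanSpace ℝ (Fin d) → EuclideanSpace ℝ (Fin d))
    (hP : ∀ x, IsMinOn (fun z => 1 / (2 * s) * ‖z - (x - s • f' x)‖ ^ 2 + g z) Set.univ (P x))
    (G : EuclideanSpace ℝ (Fin d) → EuclideanSpace ℝ (Fin d))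
    (hG : ∀ x, G x = s⁻¹ • (x - P x)) :
    ∀ x y : EuclideanSpace ℝ (Fin d),
      Φ (y - s • G y) ≤ Φ x + ⟪G y, y - x⟫ - (s - s ^ 2 * L / 2) * ‖G y‖ ^ 2 :=
  pivotal_inequality_composite_general f g f' L s hs hfconv hf' hlip hgconv Φ hΦ P hP G hG
end

section
/- Let Φ = f + g with f : ℝ^d → ℝ convex with L-Lipschitz gradient and g : ℝ^d → ℝ continuous convex, let x⋆ be a minimizer of Φ, let r ≥ 2 and 0 < s < 1/L. For the FISTA iterates x_k = y_{k−1} − s·G_s(y_{k−1}), y_k = x_k + ((k−1)/(k+r))(x_k − x_{k−1}) with x₀ = y₀ ∈ ℝ^d, one has for every k ≥ 0: min_{0 ≤ i ≤ k} ‖G_s(y_i)‖² ≤ 6r²‖x₀ − x⋆‖² / ( s²(1 − sL)(k+1)(2k² + (6r+1)k + 6r²) ). -/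
/-!
With the weights `t_k = (k + r) / r`, which satisfy `t_{k+1}² - t_{k+1} ≤ t_k²` once `r ≥ 2`, the
energy `E_k = 2s (t_k² - t_k) (Φ x_k - Φ x⋆) + ‖t_k y_k - (t_k - 1) x_k - x⋆‖²` drops by at least
`s² (1 - sL) t_k² ‖G_s(y_k)‖²` at every step. This comes from the proximal-gradient inequality
`Φ (y - s G) ≤ Φ z + ⟪G, y - z⟫ - s (1 - sL/2) ‖G‖²` (descent lemma for `f`, gradient inequality
for `f`, optimality of the proximal point for `g`), used at `z = x_k` with weight `t_k - 1` and at
`z = x⋆`. Telescoping gives `s² (1 - sL) ∑_{i ≤ k} t_i² ‖G_s(y_i)‖² ≤ E_0 = ‖x₀ - x⋆‖²`, and the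
minimum is at most this weighted sum divided by
`∑_{i ≤ k} t_i² = (k+1)(2k² + (6r+1)k + 6r²)/(6r²)`.
-/

open scoped RealInnerProductSpace
open Set

section ProximalGradient

variable {V : Type*} [NormedAddCommGroup V] [InnerProductSpace ℝ V]

theorem inner_sub_le_of_isMinOn_prox {g : V → ℝ} {s : ℝ} {w p : V} (hg : ConvexOn ℝ univ g)
    (hs : 0 < s) (hp : IsMinOn (fun z => 1 / (2 * s) * ‖z - w‖ ^ 2 + g z) univ p) (z : V) :
    ⟪w - p, z - p⟫ ≤ s * (g z - g p) := by
  have hsegment : ∀ t ∈ Ioc (0 : ℝ) 1,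
      ⟪w - p, z - p⟫ ≤ s * (g z - g p) + t / 2 * ‖z - p‖ ^ 2 := by
    rintro t ⟨ht0, ht1⟩
    have hmin := hp (mem_univ ((1 - t) • p + t • z))
    have hconv := hg.2 (mem_univ p) (mem_univ z) (sub_nonneg.mpr ht1) ht0.le (by ring)
    have hnorm : ‖(1 - t) • p + t • z - w‖ ^ 2
        = ‖p - w‖ ^ 2 - 2 * t * ⟪w - p, z - p⟫ + t ^ 2 * ‖z - p‖ ^ 2 := by
      rw [show (1 - t) • p + t • z - w = (p - w) + t • (z - p) by module, norm_add_sq_real,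
        real_inner_smul_right, norm_smul, Real.norm_of_nonneg ht0.le, ← neg_sub w p,
        inner_neg_left]
      ring
    simp only [mem_ofPred_eq, hnorm, smul_eq_mul] at hmin hconv
    have hscaled : 0 ≤ t * (s * (g z - g p) + t / 2 * ‖z - p‖ ^ 2 - ⟪w - p, z - p⟫) := by
      have h2s : 0 < 2 * s := by positivity
      rw [one_div, ← div_eq_inv_mul, ← div_eq_inv_mul, div_add' _ _ _ h2s.ne',
        div_add' _ _ _ h2s.ne', div_le_div_iff_of_pos_right h2s] at hmin
      nlinarith
    linarith [nonneg_of_mul_nonneg_right hscaled ht0]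
  have hlim : Filter.Tendsto (fun t : ℝ => s * (g z - g p) + t / 2 * ‖z - p‖ ^ 2)
      (nhdsWithin 0 (Ioi 0)) (nhds (s * (g z - g p))) := by
    refine tendsto_nhdsWithin_of_tendsto_nhds ?_
    simpa using ((continuous_id.div_const 2).mul_const (‖z - p‖ ^ 2)).const_add
      (s * (g z - g p)) |>.tendsto 0
  exact ge_of_tendsto hlim (Filter.eventually_of_mem (Ioc_mem_nhdsGT zero_lt_one) hsegment)

variable [CompleteSpace V]

theorem HasGradientAt.hasDerivAt_comp_line {f : V → ℝ} {f'p a v : V} {t : ℝ}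
    (hf : HasGradientAt f f'p (a + t • v)) :
    HasDerivAt (fun t : ℝ => f (a + t • v)) ⟪f'p, v⟫ t := by
  have hline : HasDerivAt (fun t : ℝ => a + t • v) v t := by
    simpa using ((hasDerivAt_id t).smul_const v).const_add a
  have h := (hasGradientAt_iff_hasFDerivAt.mp hf).comp_hasDerivAt t hline
  rwa [InnerProductSpace.toDual_apply_apply] at h

theorem ConvexOn.add_inner_le_of_hasGradientAt_s10 {f : V → ℝ} {f'y y : V}
    (hf : ConvexOn ℝ univ f) (hy : HasGradientAt f f'y y) (z : V) :
    f y + ⟪f'y, z - y⟫ ≤ f z := by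
  have hline : ConvexOn ℝ univ (fun t : ℝ => f (y + t • (z - y))) := by
    have h := hf.comp_affineMap (AffineMap.lineMap y z : ℝ →ᵃ[ℝ] V)
    rw [preimage_univ] at h
    refine h.congr fun t _ => ?_
    simp [AffineMap.lineMap_apply_module', add_comm]
  have hslope := hline.le_slope_of_hasDerivAt (mem_univ 0) (mem_univ 1) zero_lt_one
    (HasGradientAt.hasDerivAt_comp_line (by simpa using hy))
  simp only [slope_def_field, one_smul, zero_smul, add_zero, add_sub_cancel, sub_zero,
    div_one] at hslope
  linarith

theorem le_add_inner_add_sq_of_lipschitz_gradient_s10 {f : V → ℝ} {f' : V → V} {L : ℝ}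
    (hf : ∀ p, HasGradientAt f (f' p) p) (hlip : ∀ p q, ‖f' p - f' q‖ ≤ L * ‖p - q‖) (a b : V) :
    f b ≤ f a + ⟪f' a, b - a⟫ + L / 2 * ‖b - a‖ ^ 2 := by
  set χ : ℝ → ℝ :=
    fun t => f (a + t • (b - a)) - t * ⟪f' a, b - a⟫ - L / 2 * t ^ 2 * ‖b - a‖ ^ 2
  have hχ : ∀ t, HasDerivAt χ
      (⟪f' (a + t • (b - a)) - f' a, b - a⟫ - L * t * ‖b - a‖ ^ 2) t := by
    intro t
    refine ((((hf _).hasDerivAt_comp_line).sub ((hasDerivAt_id t).mul_const ⟪f' a, b - a⟫)).sub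
      (((hasDerivAt_pow 2 t).const_mul (L / 2)).mul_const (‖b - a‖ ^ 2))).congr_deriv ?_
    simp only [inner_sub_left, Nat.cast_ofNat]
    ring
  have hanti : AntitoneOn χ (Icc 0 1) := by
    refine antitoneOn_of_hasDerivWithinAt_nonpos (convex_Icc 0 1)
      (HasDerivAt.continuousOn fun t _ => hχ t) (fun t _ => (hχ t).hasDerivWithinAt) ?_
    intro t ht
    rw [interior_Icc] at ht
    have hcs := real_inner_le_norm (f' (a + t • (b - a)) - f' a) (b - a)
    have hlip' := mul_le_mul_of_nonneg_right (hlip (a + t • (b - a)) a) (norm_nonneg (b - a))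
    rw [add_sub_cancel_left, norm_smul, Real.norm_of_nonneg ht.1.le] at hlip'
    linarith
  have := hanti (left_mem_Icc.mpr zero_le_one) (right_mem_Icc.mpr zero_le_one) zero_le_one
  norm_num [χ] at this
  linarith

theorem add_le_add_inner_sub_of_isMinOn_proxGrad {f g : V → ℝ} {f' : V → V} {L s : ℝ}
    (hfconv : ConvexOn ℝ univ f) (hf : ∀ p, HasGradientAt f (f' p) p)
    (hlip : ∀ p q, ‖f' p - f' q‖ ≤ L * ‖p - q‖) (hgconv : ConvexOn ℝ univ g) (hs : 0 < s)
    {y G : V}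
    (hmin : IsMinOn (fun z => 1 / (2 * s) * ‖z - (y - s • f' y)‖ ^ 2 + g z) univ (y - s • G))
    (z : V) :
    f (y - s • G) + g (y - s • G)
      ≤ f z + g z + ⟪G, y - z⟫ - s * (1 - s * L / 2) * ‖G‖ ^ 2 := by
  have hdescent := le_add_inner_add_sq_of_lipschitz_gradient_s10 hf hlip y (y - s • G)
  have hconvex := hfconv.add_inner_le_of_hasGradientAt_s10 (hf y) z
  have hprox := inner_sub_le_of_isMinOn_prox hgconv hs hmin z
  rw [show y - s • f' y - (y - s • G) = s • (G - f' y) by module, real_inner_smul_left,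
    mul_le_mul_iff_of_pos_left hs] at hprox
  rw [show y - s • G - y = -(s • G) by abel, norm_neg, norm_smul, Real.norm_of_nonneg hs.le]
    at hdescent
  simp only [inner_sub_left, inner_sub_right, inner_neg_right, real_inner_smul_right,
    real_inner_self_eq_norm_sq] at hdescent hconvex hprox ⊢
  linarith

end ProximalGradient

noncomputable def fistaWeight (r : ℝ) (k : ℕ) : ℝ := (k + r) / r

section FistaWeight

variable {r : ℝ}

theorem fistaWeight_zero (hr : r ≠ 0) : fistaWeight r 0 = 1 := by
  simp [fistaWeight, hr]

theorem one_le_fistaWeight (hr : 0 < r) (k : ℕ) : 1 ≤ fistaWeight r k := by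
  rw [fistaWeight, le_div_iff₀ hr]
  linarith [k.cast_nonneg (α := ℝ)]

theorem fistaWeight_succ_mul_momentum (hr : 0 < r) (k : ℕ) :
    fistaWeight r (k + 1) * ((((k : ℝ) + 1) - 1) / (((k : ℝ) + 1) + r))
      = fistaWeight r k - 1 := by
  have : (k : ℝ) + 1 + r ≠ 0 := by positivity
  simp only [fistaWeight, Nat.cast_succ]
  field_simp
  ring

theorem fistaWeight_succ_sq_sub_le (hr : 2 ≤ r) (k : ℕ) :
    fistaWeight r (k + 1) ^ 2 - fistaWeight r (k + 1) ≤ fistaWeight r k ^ 2 := by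
  have hr0 : 0 < r := by linarith
  have hk : (0 : ℝ) ≤ k := k.cast_nonneg
  simp only [fistaWeight, Nat.cast_succ]
  calc ((k + 1 + r) / r) ^ 2 - (k + 1 + r) / r
        = ((k + 1 + r) ^ 2 - r * (k + 1 + r)) / r ^ 2 := by field_simp
    _ ≤ (k + r) ^ 2 / r ^ 2 := by gcongr; nlinarith
    _ = ((k + r) / r) ^ 2 := (div_pow _ _ _).symm

theorem sum_range_fistaWeight_sq (hr : r ≠ 0) (k : ℕ) :
    ∑ i ∈ Finset.range (k + 1), fistaWeight r i ^ 2
      = ((k : ℝ) + 1) * (2 * (k : ℝ) ^ 2 + (6 * r + 1) * k + 6 * r ^ 2) / (6 * r ^ 2) := by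
  induction k with
  | zero => simp [fistaWeight, hr]
  | succ n ih =>
    rw [Finset.sum_range_succ, ih, fistaWeight]
    push_cast
    field_simp
    ring

end FistaWeight

theorem sum_range_le_of_add_le {F a : ℕ → ℝ} (hF : ∀ i, F (i + 1) + a i ≤ F i) (n : ℕ)
    (hn : 0 ≤ F n) : ∑ i ∈ Finset.range n, a i ≤ F 0 :=
  calc ∑ i ∈ Finset.range n, a i ≤ ∑ i ∈ Finset.range n, (F i - F (i + 1)) :=
        Finset.sum_le_sum fun i _ => by linarith [hF i]
    _ = F 0 - F n := Finset.sum_range_sub' F n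
    _ ≤ F 0 := by linarith

theorem inf'_mul_sum_le_sum_mul {ι : Type*} (s : Finset ι) (hs : s.Nonempty) (w a : ι → ℝ)
    (hw : ∀ i ∈ s, 0 ≤ w i) : s.inf' hs a * ∑ i ∈ s, w i ≤ ∑ i ∈ s, w i * a i := by
  rw [Finset.mul_sum]
  exact Finset.sum_le_sum fun i hi => by
    rw [mul_comm]
    exact mul_le_mul_of_nonneg_left (Finset.inf'_le a hi) (hw i hi)

section Lyapunov

variable {V : Type*} [NormedAddCommGroup V] [InnerProductSpace ℝ V]

theorem lyapunov_step_le {Φ : V → ℝ} {s L t : ℝ} (hs : 0 ≤ s) (ht : 1 ≤ t) {x y g xstar : V}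
    (hstep : ∀ z, Φ (y - s • g) ≤ Φ z + ⟪g, y - z⟫ - s * (1 - s * L / 2) * ‖g‖ ^ 2) :
    2 * s * t ^ 2 * (Φ (y - s • g) - Φ xstar) + ‖t • y - (t - 1) • x - xstar - (s * t) • g‖ ^ 2
        + s ^ 2 * (1 - s * L) * t ^ 2 * ‖g‖ ^ 2
      ≤ 2 * s * (t ^ 2 - t) * (Φ x - Φ xstar) + ‖t • y - (t - 1) • x - xstar‖ ^ 2 := by
  set u := t • y - (t - 1) • x - xstar
  have hcomb : t * Φ (y - s • g)
      ≤ (t - 1) * Φ x + Φ xstar + ⟪g, u⟫ - t * (s * (1 - s * L / 2) * ‖g‖ ^ 2) := by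
    have hx := mul_le_mul_of_nonneg_left (hstep x) (sub_nonneg.mpr ht)
    have hu : (t - 1) * ⟪g, y - x⟫ + ⟪g, y - xstar⟫ = ⟪g, u⟫ := by
      simp only [u, inner_sub_right, real_inner_smul_right]
      ring
    linarith [hstep xstar]
  have hnorm : ‖u - (s * t) • g‖ ^ 2
      = ‖u‖ ^ 2 - 2 * (s * t) * ⟪g, u⟫ + (s * t) ^ 2 * ‖g‖ ^ 2 := by
    rw [norm_sub_sq_real, real_inner_smul_right, norm_smul, mul_pow,
      Real.norm_of_nonneg (by positivity), real_inner_comm]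
    ring
  rw [hnorm]
  have := mul_le_mul_of_nonneg_left hcomb (by positivity : 0 ≤ 2 * s * t)
  linarith

theorem fista_weighted_sum_le {Φ : V → ℝ} {s L r : ℝ} (hs : 0 ≤ s) (hr : 2 ≤ r) {xstar : V}
    (hstar : ∀ z, Φ xstar ≤ Φ z) {x y g : ℕ → V} (hxy0 : x 0 = y 0)
    (hx : ∀ k, x (k + 1) = y k - s • g k)
    (hy : ∀ k : ℕ, y (k + 1) =
      x (k + 1) + ((((k : ℝ) + 1) - 1) / (((k : ℝ) + 1) + r)) • (x (k + 1) - x k))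
    (hstep : ∀ k z, Φ (x (k + 1)) ≤ Φ z + ⟪g k, y k - z⟫ - s * (1 - s * L / 2) * ‖g k‖ ^ 2)
    (n : ℕ) :
    s ^ 2 * (1 - s * L) * ∑ i ∈ Finset.range n, fistaWeight r i ^ 2 * ‖g i‖ ^ 2
      ≤ ‖x 0 - xstar‖ ^ 2 := by
  have hr0 : 0 < r := by linarith
  set T := fistaWeight r
  set U : ℕ → V := fun k => T k • y k - (T k - 1) • x k - xstar
  set F : ℕ → ℝ := fun k => 2 * s * (T k ^ 2 - T k) * (Φ (x k) - Φ xstar) + ‖U k‖ ^ 2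
  have hU : ∀ k, U (k + 1) = U k - (s * T k) • g k := by
    intro k
    simp only [U]
    rw [hy k, smul_add, smul_smul, fistaWeight_succ_mul_momentum hr0 k, hx k]
    module
  have hF : ∀ k, F (k + 1) + s ^ 2 * (1 - s * L) * (T k ^ 2 * ‖g k‖ ^ 2) ≤ F k := by
    intro k
    have hgap := mul_le_mul_of_nonneg_left (mul_le_mul_of_nonneg_right
      (fistaWeight_succ_sq_sub_le hr k) (sub_nonneg.mpr (hstar (x (k + 1)))))
      (by positivity : 0 ≤ 2 * s)
    have hlyap := lyapunov_step_le (x := x k) (xstar := xstar) hs (one_le_fistaWeight hr0 k)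
      (fun z => hx k ▸ hstep k z)
    simp only [F, hU k]
    rw [← hx k] at hlyap
    linarith
  have hF0 : F 0 = ‖x 0 - xstar‖ ^ 2 := by
    simp [F, U, T, fistaWeight_zero hr0.ne', hxy0]
  have hFn : 0 ≤ F n := by
    have hT := one_le_fistaWeight hr0 n
    have : 0 ≤ T n ^ 2 - T n := by nlinarith
    have := sub_nonneg.mpr (hstar (x n))
    positivity
  rw [Finset.mul_sum, ← hF0]
  exact sum_range_le_of_add_le hF n hFn

end Lyapunov

theorem fista_subgradient_norm_rate_general {d : ℕ}
    (f g : EuclideanSpace ℝ (Fin d) → ℝ)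
    (f' : EuclideanSpace ℝ (Fin d) → EuclideanSpace ℝ (Fin d))
    (L s r : ℝ) (hs : 0 < s) (hr : 2 ≤ r)
    (hfconv : ConvexOn ℝ Set.univ f)
    (hf' : ∀ x, HasGradientAt f (f' x) x)
    (hlip : ∀ x y, ‖f' x - f' y‖ ≤ L * ‖x - y‖)
    (hgconv : ConvexOn ℝ Set.univ g)
    (Φ : EuclideanSpace ℝ (Fin d) → ℝ) (hΦ : ∀ x, Φ x = f x + g x)
    (P : EuclideanSpace ℝ (Fin d) → EuclideanSpace ℝ (Fin d))
    (hP : ∀ x, IsMinOn (fun z => 1 / (2 * s) * ‖z - (x - s • f' x)‖ ^ 2 + g z) Set.univ (P x))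
    (G : EuclideanSpace ℝ (Fin d) → EuclideanSpace ℝ (Fin d))
    (hG : ∀ x, G x = s⁻¹ • (x - P x))
    (xstar : EuclideanSpace ℝ (Fin d)) (hstar : IsMinOn Φ Set.univ xstar)
    (x y : ℕ → EuclideanSpace ℝ (Fin d)) (hxy0 : x 0 = y 0)
    (hx : ∀ k : ℕ, x (k + 1) = y k - s • G (y k))
    (hy : ∀ k : ℕ, y (k + 1) =
      x (k + 1) + ((((k : ℝ) + 1) - 1) / (((k : ℝ) + 1) + r)) • (x (k + 1) - x k))
    (hsL : s < 1 / L) :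
    ∀ k : ℕ,
      Finset.inf' (Finset.range (k + 1)) Finset.nonempty_range_add_one
          (fun i => ‖G (y i)‖ ^ 2) ≤
        6 * r ^ 2 * ‖x 0 - xstar‖ ^ 2 /
          (s ^ 2 * (1 - s * L) * ((k : ℝ) + 1) *
            (2 * (k : ℝ) ^ 2 + (6 * r + 1) * (k : ℝ) + 6 * r ^ 2)) := by
  intro k
  have hr0 : 0 < r := by linarith
  have hsL' : 0 < 1 - s * L := by
    rcases le_or_gt L 0 with hL | hL
    · nlinarith
    · rw [lt_div_iff₀ hL] at hsL
      linarith
  have hstep : ∀ i z, Φ (x (i + 1))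
      ≤ Φ z + ⟪G (y i), y i - z⟫ - s * (1 - s * L / 2) * ‖G (y i)‖ ^ 2 := by
    intro i z
    have hPy : P (y i) = y i - s • G (y i) := by
      rw [hG, smul_smul, mul_inv_cancel₀ hs.ne', one_smul, sub_sub_cancel]
    rw [hx i, hΦ, hΦ]
    exact add_le_add_inner_sub_of_isMinOn_proxGrad hfconv hf' hlip hgconv hs (hPy ▸ hP (y i)) z
  have hsum := fista_weighted_sum_le hs.le hr (fun z => hstar (mem_univ z)) hxy0 hx hy hstep
    (k + 1)
  set m := Finset.inf' (Finset.range (k + 1)) Finset.nonempty_range_add_one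
    (fun i => ‖G (y i)‖ ^ 2)
  set Q := 2 * (k : ℝ) ^ 2 + (6 * r + 1) * (k : ℝ) + 6 * r ^ 2
  have hmin : m * (((k : ℝ) + 1) * Q / (6 * r ^ 2))
      ≤ ∑ i ∈ Finset.range (k + 1), fistaWeight r i ^ 2 * ‖G (y i)‖ ^ 2 := by
    rw [← sum_range_fistaWeight_sq hr0.ne']
    exact inf'_mul_sum_le_sum_mul _ _ _ _ fun i _ => sq_nonneg _
  have hQ : 0 < Q := by positivity
  rw [le_div_iff₀ (by positivity)]
  calc m * (s ^ 2 * (1 - s * L) * ((k : ℝ) + 1) * Q)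
      = 6 * r ^ 2 * (s ^ 2 * (1 - s * L) * (m * (((k : ℝ) + 1) * Q / (6 * r ^ 2)))) := by
        field_simp
    _ ≤ 6 * r ^ 2 * ‖x 0 - xstar‖ ^ 2 := by
        gcongr
        exact (mul_le_mul_of_nonneg_left hmin (by positivity)).trans hsum

/-- **FISTA proximal subgradient norm minimization.** For momentum `r ≥ 2` and step size
`0 < s < 1/L`, `min_{0 ≤ i ≤ k} ‖G_s(y_i)‖² ≤
6r²‖x₀ − x⋆‖²/(s²(1 − sL)(k+1)(2k² + (6r+1)k + 6r²))` for every `k ≥ 0`. -/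
theorem fista_subgradient_norm_rate {d : ℕ}
    (f g : EuclideanSpace ℝ (Fin d) → ℝ)
    (f' : EuclideanSpace ℝ (Fin d) → EuclideanSpace ℝ (Fin d))
    (L s r : ℝ) (hL : 0 < L) (hs : 0 < s) (hr : 2 ≤ r)
    (hfconv : ConvexOn ℝ Set.univ f)
    (hf' : ∀ x, HasGradientAt f (f' x) x)
    (hlip : ∀ x y, ‖f' x - f' y‖ ≤ L * ‖x - y‖)
    (hgconv : ConvexOn ℝ Set.univ g) (hgcont : Continuous g)
    (Φ : EuclideanSpace ℝ (Fin d) → ℝ) (hΦ : ∀ x, Φ x = f x + g x)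
    (P : EuclideanSpace ℝ (Fin d) → EuclideanSpace ℝ (Fin d))
    (hP : ∀ x, IsMinOn (fun z => 1 / (2 * s) * ‖z - (x - s • f' x)‖ ^ 2 + g z) Set.univ (P x))
    (G : EuclideanSpace ℝ (Fin d) → EuclideanSpace ℝ (Fin d))
    (hG : ∀ x, G x = s⁻¹ • (x - P x))
    (xstar : EuclideanSpace ℝ (Fin d)) (hstar : IsMinOn Φ Set.univ xstar)
    (x y : ℕ → EuclideanSpace ℝ (Fin d)) (hxy0 : x 0 = y 0)
    (hx : ∀ k : ℕ, x (k + 1) = y k - s • G (y k))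
    (hy : ∀ k : ℕ, y (k + 1) =
      x (k + 1) + ((((k : ℝ) + 1) - 1) / (((k : ℝ) + 1) + r)) • (x (k + 1) - x k))
    (hsL : s < 1 / L) :
    ∀ k : ℕ,
      Finset.inf' (Finset.range (k + 1)) Finset.nonempty_range_add_one
          (fun i => ‖G (y i)‖ ^ 2) ≤
        6 * r ^ 2 * ‖x 0 - xstar‖ ^ 2 /
          (s ^ 2 * (1 - s * L) * ((k : ℝ) + 1) *
            (2 * (k : ℝ) ^ 2 + (6 * r + 1) * (k : ℝ) + 6 * r ^ 2)) :=
  fista_subgradient_norm_rate_general f g f' L s r hs hr hfconv hf' hlip hgconv Φ hΦ P hP G hG xstar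
    hstar x y hxy0 hx hy hsL
end
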